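/- Let f_1 ≡ 1 on [0,1] be agent 1's true density and f_1' = ℓ⁽ⁿ⁾ (equal to 3/2 on [0,1/(2n)), 1/2 on [1/(2n),1/n), 1 on [1/n,1]). In the n-agent moving-knife procedure, for any densities f_2,...,f_n of the other agents, the interval agent 1 receives when reporting f_1' has Lebesgue measure (hence true value) at least 1/n; i.e., the misreport f_1' never drops agent 1 below the proportional share. -/

import Mathlib

/-!
`ℓ⁽ⁿ⁾` is the right derivative of `x ↦ x + min x (1/(2n)) - min x (1/n) / 2`, so its integral
over `[a, b]` is `(b - a) + (min b d - min a d) - (min b (2d) - min a (2d)) / 2` with `d = 1/(2n)`.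
Comparing `a ≥ 0` and `b` with `d` and `2d` shows that an interval of reported value `≥ 1/n`
has length `≥ 1/n`. A piece cut for agent 1 has reported value exactly `1/n`; if agent 1 is
served last, each of the `n - 1` earlier pieces has reported value at most `1/n` for agent 1,
so the remainder has reported value at least `1/n`.
-/

open MeasureTheory Set intervalIntegral

/-- The density `ℓ⁽ⁿ⁾`: `3/2` on `[0, 1/(2n))`, `1/2` on `[1/(2n), 1/n)`, `1` on `[1/n, 1]`. -/
noncomputable def ell (n : ℕ) : ℝ → ℝ := fun x =>
  if x < 1 / (2 * n) then 3/2 else if x < 1 / n then 1/2 else 1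

theorem hasDerivWithinAt_min_const_Ioi (c x : ℝ) :
    HasDerivWithinAt (fun y => min y c) (if x < c then 1 else 0) (Ioi x) x := by
  split_ifs with hxc
  · exact ((hasDerivAt_id x).congr_of_eventuallyEq
      (Filter.eventually_of_mem (Iio_mem_nhds hxc) fun y hy => min_eq_left (le_of_lt hy))
      ).hasDerivWithinAt
  · have hcx : c ≤ x := not_lt.1 hxc
    exact (hasDerivWithinAt_const x _ c).congr
      (fun y hy => min_eq_right (hcx.trans (le_of_lt hy))) (min_eq_right hcx)

theorem measurable_ell (n : ℕ) : Measurable (ell n) :=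
  Measurable.ite measurableSet_Iio measurable_const
    (Measurable.ite measurableSet_Iio measurable_const measurable_const)

theorem intervalIntegrable_ell (n : ℕ) (a b : ℝ) : IntervalIntegrable (ell n) volume a b :=
  (intervalIntegrable_const (c := (3 / 2 : ℝ))).mono_fun'
    (measurable_ell n).aestronglyMeasurable
    (Filter.Eventually.of_forall fun x =>
      show ‖ell n x‖ ≤ 3 / 2 by unfold ell; split_ifs <;> norm_num)

noncomputable def ellPrimitive (n : ℕ) (x : ℝ) : ℝ :=
  x + min x (1 / (2 * n)) - min x (1 / n) / 2

theorem continuous_ellPrimitive (n : ℕ) : Continuous (ellPrimitive n) := by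
  unfold ellPrimitive; fun_prop

theorem hasDerivWithinAt_ellPrimitive (n : ℕ) (x : ℝ) :
    HasDerivWithinAt (ellPrimitive n) (ell n x) (Ioi x) x := by
  have hd : (1 : ℝ) / (2 * n) ≤ 1 / n := by
    rw [mul_comm, ← div_div]; exact half_le_self (by positivity)
  refine (((hasDerivWithinAt_id x _).add (hasDerivWithinAt_min_const_Ioi _ x)).sub
    ((hasDerivWithinAt_min_const_Ioi _ x).div_const 2)).congr_deriv ?_
  unfold ell
  split_ifs <;> linarith

theorem integral_ell (n : ℕ) (a b : ℝ) :
    ∫ t in a..b, ell n t = ellPrimitive n b - ellPrimitive n a :=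
  integral_eq_sub_of_hasDeriv_right (continuous_ellPrimitive n).continuousOn
    (fun x _ => hasDerivWithinAt_ellPrimitive n x) (intervalIntegrable_ell n a b)

theorem integral_ell_zero_one (n : ℕ) : ∫ t in (0 : ℝ)..1, ell n t = 1 := by
  have h1 : (1 : ℝ) / n ≤ 1 := by rw [one_div]; exact Nat.cast_inv_le_one n
  have h2 : (1 : ℝ) / (2 * n) = 1 / n / 2 := by rw [mul_comm, div_div]
  rw [integral_ell, ellPrimitive, ellPrimitive, h2, min_eq_right h1,
    min_eq_right (by linarith), min_eq_left (by positivity), min_eq_left (by positivity)]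
  ring

theorem one_div_le_sub_of_one_div_le_integral_ell {n : ℕ} {a b : ℝ} (ha : 0 ≤ a)
    (h : 1 / n ≤ ∫ t in a..b, ell n t) : (1 : ℝ) / n ≤ b - a := by
  rw [integral_ell, ellPrimitive, ellPrimitive] at h
  have h2 : (1 : ℝ) / (2 * n) = 1 / n / 2 := by rw [mul_comm, div_div]
  have ht : (0 : ℝ) ≤ 1 / n := by positivity
  rw [h2] at h
  generalize (1 : ℝ) / n = t at *
  by_contra! hlt
  simp only [min_def] at h
  split_ifs at h <;> linarith

theorem integral_sub_mul_le_integral_of_integral_pieces_le {g : ℝ → ℝ}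
    (hg : ∀ x y, IntervalIntegrable g volume x y) {c : ℕ → ℝ} {m : ℕ} {s : ℝ} (b : ℝ)
    (hpieces : ∀ i < m, ∫ t in c i..c (i + 1), g t ≤ s) :
    (∫ t in c 0..b, g t) - m * s ≤ ∫ t in c m..b, g t := by
  have hsum : ∑ i ∈ Finset.range m, ∫ t in c i..c (i + 1), g t = ∫ t in c 0..c m, g t :=
    sum_integral_adjacent_intervals fun i _ => hg _ _
  have hle : ∑ i ∈ Finset.range m, ∫ t in c i..c (i + 1), g t ≤ m * s := by
    simpa using Finset.sum_le_card_nsmul _ _ s fun i hi => hpieces i (Finset.mem_range.1 hi)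
  have hsplit := integral_add_adjacent_intervals (hg (c 0) (c m)) (hg (c m) b)
  linarith

/-- If agent 1 (whose true density is uniform) reports `ℓ⁽ⁿ⁾` in the moving-knife
procedure, then for any reports of the other agents, the interval agent 1 receives has
length (hence true value) at least `1/n`: the misreport never drops agent 1 below the
proportional share. -/
theorem moving_knife_ell_misreport_safe
    (n : ℕ) (hn : 2 ≤ n)
    (f : Fin n → ℝ → ℝ)
    (hf0 : f ⟨0, by omega⟩ = ell n)
    -- σ enumerates the agents in the order they are allocated, c are the cut points
    (σ : ℕ → Fin n)
    (c : ℕ → ℝ) (hc0 : c 0 = 0) (hcIcc : ∀ j < n, c j ∈ Set.Icc (0:ℝ) 1)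
    (hexact : ∀ j < n - 1,
      (∫ t in c j..c (j + 1), f (σ j) t) = (1 / n) * ∫ t in (0:ℝ)..1, f (σ j) t)
    (hmin : ∀ j k, j ≤ k → k < n → j < n - 1 →
      (∫ t in c j..c (j + 1), f (σ k) t) ≤ (1 / n) * ∫ t in (0:ℝ)..1, f (σ k) t) :
    ∀ j < n, σ j = ⟨0, by omega⟩ →
      (if j < n - 1 then c (j + 1) - c j else 1 - c j) ≥ 1 / n := by
  intro j hj hσj
  have hell : f (σ j) = ell n := hσj ▸ hf0
  have hcj : 0 ≤ c j := (hcIcc j hj).1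
  split_ifs with hjn
  · refine one_div_le_sub_of_one_div_le_integral_ell hcj (le_of_eq ?_)
    simpa [hell, integral_ell_zero_one] using (hexact j hjn).symm
  · obtain rfl : j = n - 1 := by omega
    refine one_div_le_sub_of_one_div_le_integral_ell hcj ?_
    have hrest := integral_sub_mul_le_integral_of_integral_pieces_le (intervalIntegrable_ell n)
      1 fun i hi => by
        simpa [hell, integral_ell_zero_one] using hmin i (n - 1) (by omega) (by omega) hi
    rw [hc0, integral_ell_zero_one, Nat.cast_sub (by omega), Nat.cast_one] at hrest
    have hn0 : (n : ℝ) ≠ 0 := by positivity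
    calc (1 : ℝ) / n = 1 - (n - 1) * (n : ℝ)⁻¹ := by field_simp; ring
      _ ≤ _ := hrest
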